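/- arXiv:2107.05696 — 3 statements merged into one kernel-verified Lean document; each statement's English description precedes it below -/
import Mathlib

section
/- Let X be a skew brace. The map S : X × X → X × X defined by S(x,y) = (x^∘ ∘ (x * y), y^∘ ∘ (x * y)) is a bijection, with inverse S⁻¹(x,y) = ( ((x ∘ y^∘) * x^*)^∘ , ((x ∘ y^∘) * x^*)^∘ ∘ x ∘ y^∘ ). -/
structure SkewBrace (X : Type*) where
  circ : X → X → X
  cinv : X → X
  ce : X
  star : X → X → X
  sinv : X → X
  se : X
  circ_assoc : ∀ a b c, circ (circ a b) c = circ a (circ b c)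
  ce_circ : ∀ a, circ ce a = a
  circ_ce : ∀ a, circ a ce = a
  cinv_circ : ∀ a, circ (cinv a) a = ce
  circ_cinv : ∀ a, circ a (cinv a) = ce
  star_assoc : ∀ a b c, star (star a b) c = star a (star b c)
  se_star : ∀ a, star se a = a
  star_se : ∀ a, star a se = a
  sinv_star : ∀ a, star (sinv a) a = se
  star_sinv : ∀ a, star a (sinv a) = se
  distrib : ∀ x y z, circ x (star y z) = star (star (circ x y) (sinv x)) (circ x z)

def SkewBrace.tri {X : Type*} (B : SkewBrace X) (x y : X) : X :=
  B.circ (B.cinv y) (B.star x y)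

def SkewBrace.ov {X : Type*} (B : SkewBrace X) (x y : X) : X :=
  B.circ (B.cinv y) (B.star y x)

def SkewBrace.triInv {X : Type*} (B : SkewBrace X) (x y : X) : X :=
  B.star (B.circ y x) (B.sinv y)

def SkewBrace.ovInv {X : Type*} (B : SkewBrace X) (x y : X) : X :=
  B.star (B.sinv y) (B.circ y x)

/-!
Write `∘` for `circ` and `*` for `star`. Applying the brace law to `a ∘ (a^∘ * b)` gives the
key identity `a ∘ (a^∘ * b) = a^* * (a ∘ b)`. If `S (x, y) = (u, v)` then `x ∘ u = y ∘ v = x * y`,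
and the key identity for `a = x^∘` gives `x^∘ * u = x^∘ ∘ y = u ∘ v^∘`, which recovers `x` and then
`y = x ∘ u ∘ v^∘`. Conversely, for `x = ((u ∘ v^∘) * u^*)^∘` the key identity for `a = x` gives
`x * (x ∘ u ∘ v^∘) = x ∘ u`, so the candidate inverse is a right inverse as well.
-/

namespace SkewBrace

variable {X : Type*} (B : SkewBrace X)

lemma circ_cinv_cancel_left (a b : X) : B.circ a (B.circ (B.cinv a) b) = b := by
  rw [← B.circ_assoc, B.circ_cinv, B.ce_circ]

lemma cinv_circ_cancel_left (a b : X) : B.circ (B.cinv a) (B.circ a b) = b := by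
  rw [← B.circ_assoc, B.cinv_circ, B.ce_circ]

lemma star_sinv_cancel_left (a b : X) : B.star a (B.star (B.sinv a) b) = b := by
  rw [← B.star_assoc, B.star_sinv, B.se_star]

lemma circ_cinv_cancel_right (a b : X) : B.circ (B.circ a b) (B.cinv b) = a := by
  rw [B.circ_assoc, B.circ_cinv, B.circ_ce]

lemma star_sinv_cancel_right (a b : X) : B.star (B.star a b) (B.sinv b) = a := by
  rw [B.star_assoc, B.star_sinv, B.star_se]

lemma sinv_star_cancel_right (a b : X) : B.star (B.star a (B.sinv b)) b = a := by
  rw [B.star_assoc, B.sinv_star, B.star_se]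

lemma cinv_circ_cancel_right (a b : X) : B.circ (B.circ a (B.cinv b)) b = a := by
  rw [B.circ_assoc, B.cinv_circ, B.circ_ce]

lemma cinv_cinv (a : X) : B.cinv (B.cinv a) = a := by
  rw [← B.circ_ce (B.cinv (B.cinv a)), ← B.cinv_circ a, ← B.circ_assoc, B.cinv_circ, B.ce_circ]

lemma cinv_circ_rev (a b : X) : B.cinv (B.circ a b) = B.circ (B.cinv b) (B.cinv a) := by
  rw [← B.cinv_circ_cancel_left (B.circ a b) (B.circ (B.cinv b) (B.cinv a)), B.circ_assoc,
    B.circ_cinv_cancel_left, B.circ_cinv, B.circ_ce]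

lemma se_eq_ce : B.se = B.ce := by
  have h := B.distrib B.ce B.se B.se
  rw [B.ce_circ, B.ce_circ, B.se_star, B.se_star, B.star_se] at h
  calc B.se = B.star B.ce (B.sinv B.ce) := (B.star_sinv _).symm
    _ = B.ce := by rw [← h, B.star_se]

lemma circ_star_cinv (a b : X) :
    B.circ a (B.star (B.cinv a) b) = B.star (B.sinv a) (B.circ a b) := by
  rw [B.distrib, B.circ_cinv, ← B.se_eq_ce, B.se_star]

lemma star_circ_star_cinv (a b : X) :
    B.star a (B.circ a (B.star (B.cinv a) b)) = B.circ a b := by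
  rw [B.circ_star_cinv, B.star_sinv_cancel_left]

def sMap (p : X × X) : X × X :=
  (B.circ (B.cinv p.1) (B.star p.1 p.2), B.circ (B.cinv p.2) (B.star p.1 p.2))

def sMapInv (p : X × X) : X × X :=
  (B.cinv (B.star (B.circ p.1 (B.cinv p.2)) (B.sinv p.1)),
    B.circ (B.circ (B.cinv (B.star (B.circ p.1 (B.cinv p.2)) (B.sinv p.1))) p.1) (B.cinv p.2))

lemma sMapInv_sMap (p : X × X) : B.sMapInv (B.sMap p) = p := by
  obtain ⟨x, y⟩ := p
  set u := B.circ (B.cinv x) (B.star x y)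
  set v := B.circ (B.cinv y) (B.star x y)
  have hu : B.star (B.cinv x) u = B.circ (B.cinv x) y := by
    simpa only [B.cinv_cinv] using B.star_circ_star_cinv (B.cinv x) y
  have huv : B.circ u (B.cinv v) = B.circ (B.cinv x) y := by
    rw [B.cinv_circ_rev, B.cinv_cinv, ← B.circ_assoc, B.circ_cinv_cancel_right]
  have hx : B.star (B.circ u (B.cinv v)) (B.sinv u) = B.cinv x := by
    rw [huv, ← hu, B.star_sinv_cancel_right]
  show B.sMapInv (u, v) = (x, y)
  rw [sMapInv, hx, B.cinv_cinv, B.circ_assoc, huv, B.circ_cinv_cancel_left]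

lemma sMap_sMapInv (p : X × X) : B.sMap (B.sMapInv p) = p := by
  obtain ⟨u, v⟩ := p
  set x := B.cinv (B.star (B.circ u (B.cinv v)) (B.sinv u))
  set y := B.circ (B.circ x u) (B.cinv v)
  have hxy : B.star x y = B.circ x u := by
    have hz : B.circ u (B.cinv v) = B.star (B.cinv x) u := by
      rw [B.cinv_cinv, B.sinv_star_cancel_right]
    rw [← B.star_circ_star_cinv x u, ← hz, ← B.circ_assoc]
  show B.sMap (x, y) = (u, v)
  rw [sMap, hxy, B.cinv_circ_cancel_left, B.cinv_circ_rev, B.cinv_cinv, B.cinv_circ_cancel_right]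

end SkewBrace

theorem skewBrace_S_bijective {X : Type*} (B : SkewBrace X) :
    Function.Bijective (fun p : X × X =>
      (B.circ (B.cinv p.1) (B.star p.1 p.2), B.circ (B.cinv p.2) (B.star p.1 p.2))) ∧
    Function.LeftInverse
      (fun p : X × X =>
        (B.cinv (B.star (B.circ p.1 (B.cinv p.2)) (B.sinv p.1)),
         B.circ (B.circ (B.cinv (B.star (B.circ p.1 (B.cinv p.2)) (B.sinv p.1))) p.1) (B.cinv p.2)))
      (fun p : X × X =>
        (B.circ (B.cinv p.1) (B.star p.1 p.2), B.circ (B.cinv p.2) (B.star p.1 p.2))) ∧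
    Function.RightInverse
      (fun p : X × X =>
        (B.cinv (B.star (B.circ p.1 (B.cinv p.2)) (B.sinv p.1)),
         B.circ (B.circ (B.cinv (B.star (B.circ p.1 (B.cinv p.2)) (B.sinv p.1))) p.1) (B.cinv p.2)))
      (fun p : X × X =>
        (B.circ (B.cinv p.1) (B.star p.1 p.2), B.circ (B.cinv p.2) (B.star p.1 p.2))) := by
  have hL : Function.LeftInverse B.sMapInv B.sMap := B.sMapInv_sMap
  have hR : Function.RightInverse B.sMapInv B.sMap := B.sMap_sMapInv
  exact ⟨⟨hL.injective, hR.surjective⟩, hL, hR⟩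
end

section
/- Let X be a skew brace with operations x ▷ y = y^∘ ∘ (x * y) and x ◁ y = y^∘ ∘ (y * x). Then for all x, y, z ∈ X the first exchange law holds: (x ▷ y) ▷ (z ▷ y) = (x ▷ z) ▷ (y ◁ z). -/
/-!
The operation `x ▷ y` is the unique `t` with `y ∘ t = x * y`. With this characterization, the brace
axiom shows that `▷` is a right action of `(X, ∘)`: `(x ▷ u) ▷ w = x ▷ (u ∘ w)`. Both sides of the
exchange law are then `x ▷ (z * y)`, because `y ∘ (z ▷ y) = z * y = z ∘ (y ◁ z)`.
-/

namespace SkewBrace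

variable {X : Type*} (B : SkewBrace X)

lemma cinv_circ_cancel (a c : X) : B.circ (B.cinv a) (B.circ a c) = c := by
  rw [← B.circ_assoc, B.cinv_circ, B.ce_circ]

lemma circ_cinv_cancel (a c : X) : B.circ a (B.circ (B.cinv a) c) = c := by
  rw [← B.circ_assoc, B.circ_cinv, B.ce_circ]

lemma star_sinv_cancel (a c : X) : B.star a (B.star (B.sinv a) c) = c := by
  rw [← B.star_assoc, B.star_sinv, B.se_star]

lemma circ_tri (x y : X) : B.circ y (B.tri x y) = B.star x y :=
  B.circ_cinv_cancel y _

lemma circ_ov (x y : X) : B.circ y (B.ov x y) = B.star y x :=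
  B.circ_cinv_cancel y _

lemma eq_tri_of_circ_eq {x y t : X} (h : B.circ y t = B.star x y) : t = B.tri x y := by
  rw [tri, ← h, cinv_circ_cancel]

lemma tri_tri (x u w : X) : B.tri (B.tri x u) w = B.tri x (B.circ u w) := by
  apply eq_tri_of_circ_eq
  calc B.circ (B.circ u w) (B.tri (B.tri x u) w)
      = B.circ u (B.star (B.tri x u) w) := by rw [circ_assoc, circ_tri]
    _ = B.star (B.star (B.star x u) (B.sinv u)) (B.circ u w) := by rw [distrib, circ_tri]
    _ = B.star x (B.circ u w) := by simp only [star_assoc, star_sinv_cancel]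

end SkewBrace

theorem skewBrace_first_exchange {X : Type*} (B : SkewBrace X) (x y z : X) :
    B.tri (B.tri x y) (B.tri z y) = B.tri (B.tri x z) (B.ov y z) := by
  rw [B.tri_tri, B.tri_tri, B.circ_tri, B.circ_ov]
end

section
/- Let X be a skew brace with operations x ▷ y = y^∘ ∘ (x * y) and x ◁ y = y^∘ ∘ (y * x). Then for all x, y, z ∈ X the second exchange law holds: (x ▷ y) ◁ (z ▷ y) = (x ◁ z) ▷ (y ◁ z). -/
/-
With λ_a(b) = a^* * (a ∘ b), an action of (X, ∘) on (X, *) by automorphisms, one has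
x ◁ z = λ_{z^∘}(x) and x ▷ y = y^∘ * λ_{y^∘}(x) * (y^∘)^*. Put q = (z * y)^∘. Since
(z ▷ y)^∘ = q ∘ y and λ_y(x ▷ y) = y^* * x * y, the left side is λ_q(x) conjugated by λ_q(y);
since (y ◁ z)^∘ = q ∘ z, the right side is λ_q(x) conjugated by (q ∘ z)^*. The two agree
because q ∘ (z * y) = 1 forces λ_q(y) = (q ∘ z)^*.
-/

namespace SkewBrace

variable {X : Type*} (B : SkewBrace X)

lemma sinv_star_cancel_left (a b : X) : B.star (B.sinv a) (B.star a b) = b := by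
  rw [← B.star_assoc, B.sinv_star, B.se_star]

lemma eq_sinv_of_star_eq_se {a b : X} (h : B.star a b = B.se) : b = B.sinv a := by
  rw [← B.sinv_star_cancel_left a b, h, B.star_se]

lemma sinv_sinv (a : X) : B.sinv (B.sinv a) = a :=
  (B.eq_sinv_of_star_eq_se (B.sinv_star a)).symm

lemma sinv_se : B.sinv B.se = B.se :=
  (B.eq_sinv_of_star_eq_se (B.se_star B.se)).symm

lemma eq_cinv_of_circ_eq_ce {a b : X} (h : B.circ a b = B.ce) : b = B.cinv a := by
  rw [← B.cinv_circ_cancel_left a b, h, B.circ_ce]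

lemma circ_se (a : X) : B.circ a B.se = a := by
  rw [B.se_eq_ce, B.circ_ce]

def lam (a b : X) : X := B.star (B.sinv a) (B.circ a b)

lemma circ_eq_star_lam (a b : X) : B.circ a b = B.star a (B.lam a b) := by
  rw [lam, B.star_sinv_cancel_left]

lemma lam_star (a b c : X) : B.lam a (B.star b c) = B.star (B.lam a b) (B.lam a c) := by
  simp only [lam, B.distrib, B.star_assoc]

lemma lam_se (a : X) : B.lam a B.se = B.se := by
  rw [lam, B.circ_se, B.sinv_star]

lemma lam_sinv (a b : X) : B.lam a (B.sinv b) = B.sinv (B.lam a b) := by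
  apply B.eq_sinv_of_star_eq_se
  rw [← B.lam_star, B.star_sinv, B.lam_se]

lemma lam_circ (a b c : X) : B.lam (B.circ a b) c = B.lam a (B.lam b c) := by
  rw [lam, B.circ_assoc, B.circ_eq_star_lam b c, B.distrib, B.star_assoc,
    B.sinv_star_cancel_left]
  rfl

lemma lam_ce (a : X) : B.lam B.ce a = a := by
  rw [lam, B.ce_circ, ← B.se_eq_ce, B.sinv_se, B.se_star]

lemma lam_lam_cinv (a b : X) : B.lam a (B.lam (B.cinv a) b) = b := by
  rw [← B.lam_circ, B.circ_cinv, B.lam_ce]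

lemma ov_eq_lam (x y : X) : B.ov x y = B.lam (B.cinv y) x := by
  rw [ov, lam, B.distrib, B.cinv_circ, ← B.se_eq_ce, B.se_star]

lemma tri_eq_star_lam (x y : X) :
    B.tri x y = B.star (B.cinv y) (B.star (B.lam (B.cinv y) x) (B.sinv (B.cinv y))) := by
  rw [tri, B.distrib, B.cinv_circ, ← B.se_eq_ce, B.star_se, B.circ_eq_star_lam, B.star_assoc]

lemma lam_tri (x y : X) : B.lam y (B.tri x y) = B.star (B.sinv y) (B.star x y) := by
  rw [tri, lam, B.circ_cinv_cancel_left]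

lemma cinv_tri (x y : X) : B.cinv (B.tri x y) = B.circ (B.cinv (B.star x y)) y := by
  rw [tri, B.cinv_circ_rev, B.cinv_cinv]

lemma cinv_ov (x y : X) : B.cinv (B.ov x y) = B.circ (B.cinv (B.star y x)) y := by
  rw [ov, B.cinv_circ_rev, B.cinv_cinv]

lemma lam_cinv_star_right (a b : X) :
    B.lam (B.cinv (B.star a b)) b = B.sinv (B.circ (B.cinv (B.star a b)) a) := by
  apply B.eq_sinv_of_star_eq_se
  rw [B.circ_eq_star_lam, B.star_assoc, ← B.lam_star, ← B.circ_eq_star_lam, B.cinv_circ,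
    B.se_eq_ce]

end SkewBrace

theorem skewBrace_second_exchange {X : Type*} (B : SkewBrace X) (x y z : X) :
    B.ov (B.tri x y) (B.tri z y) = B.tri (B.ov x z) (B.ov y z) := by
  set q := B.cinv (B.star z y)
  have hy : B.lam q y = B.sinv (B.circ q z) := B.lam_cinv_star_right z y
  have hx : B.lam (B.circ q z) (B.ov x z) = B.lam q x := by
    rw [B.ov_eq_lam, B.lam_circ, B.lam_lam_cinv]
  rw [B.ov_eq_lam, B.cinv_tri, B.lam_circ, B.lam_tri, B.lam_star, B.lam_star, B.lam_sinv, hy,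
    B.sinv_sinv, B.tri_eq_star_lam, B.cinv_ov, hx]
end
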